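/- arXiv:2605.28872 — 4 statements merged into one kernel-verified Lean document; each statement's English description precedes it below -/
import Mathlib

section
/- Let K ≥ 1, let λ_i > 0 and C_i > 0 for i = 1, …, K, and let B > 0 be a bandwidth budget. Consider minimizing Σ_{i=1}^{K} (λ_i·Δ_i/2 + C_i/(b_i·Δ_i)) over all Δ_i > 0 and b_i > 0 subject to Σ_{i=1}^{K} b_i ≤ B. The minimum is attained exactly at b_i* = B·(λ_i C_i)^{1/3} / Σ_{j=1}^{K} (λ_j C_j)^{1/3} and Δ_i* = √(2C_i/(λ_i·b_i*)), and the minimal value equals √(2/B) · (Σ_{i=1}^{K} (λ_i C_i)^{1/3})^{3/2}. -/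
open Finset

private lemma sub_key (p q Δ s : ℝ) (hΔ : 0 < Δ) :
    p*Δ/2 + q/Δ - s = (p*Δ^2 - 2*s*Δ + 2*q)/(2*Δ) := by
  field_simp; ring

private lemma amgm_le (p q Δ : ℝ) (hp : 0 < p) (hq : 0 < q) (hΔ : 0 < Δ) :
    Real.sqrt (2*p*q) ≤ p*Δ/2 + q/Δ := by
  have hs : (Real.sqrt (2*p*q))^2 = 2*p*q := Real.sq_sqrt (by positivity)
  rw [← sub_nonneg, sub_key p q Δ _ hΔ]
  apply div_nonneg _ (by positivity)
  nlinarith [sq_nonneg (p*Δ - Real.sqrt (2*p*q)), hs, hp]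

private lemma amgm_eq (p q Δ : ℝ) (hp : 0 < p) (hq : 0 < q) (hΔ : 0 < Δ)
    (h : p*Δ/2 + q/Δ = Real.sqrt (2*p*q)) : Δ = Real.sqrt (2*q/p) := by
  set s := Real.sqrt (2*p*q) with hsdef
  have hs : s^2 = 2*p*q := Real.sq_sqrt (by positivity)
  have h1 : (p*Δ^2 - 2*s*Δ + 2*q)/(2*Δ) = 0 := by
    rw [← sub_key p q Δ s hΔ, h, sub_self]
  have h0 : p*Δ^2 - 2*s*Δ + 2*q = 0 := by
    field_simp at h1; linarith
  have h2 : (p*Δ - s)^2 = 0 := by nlinarith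
  have h3 : p*Δ = s := by
    have := pow_eq_zero_iff (n := 2) (by norm_num) |>.mp h2
    linarith [sub_eq_zero.mp this]
  have h4 : Δ = s/p := by rw [eq_div_iff hp.ne']; linarith
  have h5 : 2*q/p = (2*p*q)/p^2 := by field_simp
  rw [h4, h5, Real.sqrt_div (by positivity), Real.sqrt_sq hp.le]

private lemma amgm_at (p q : ℝ) (hp : 0 < p) (hq : 0 < q) :
    p*(Real.sqrt (2*q/p))/2 + q/(Real.sqrt (2*q/p)) = Real.sqrt (2*p*q) := by
  set t := Real.sqrt (2*q/p) with htdef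
  have ht : 0 < t := Real.sqrt_pos.mpr (by positivity)
  have ht2 : t^2 = 2*q/p := Real.sq_sqrt (by positivity)
  have htp : t^2 * p = 2*q := by rw [ht2]; field_simp
  have hval : (p*t/2 + q/t)^2 = 2*p*q := by
    field_simp
    nlinarith [htp, sq_nonneg t]
  rw [← Real.sqrt_sq (by positivity : (0:ℝ) ≤ p*t/2 + q/t), hval]

private lemma tangent_id (u v : ℝ) (hu : 0 < u) (hv : 0 < v) :
    1/u - (1/v - (u^2 - v^2)/(2*v^3)) = (u-v)^2*(u+2*v)/(2*u*v^3) := by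
  field_simp; ring


set_option maxHeartbeats 1600000 in
/-- Network-coupled checkpoint allocation. Minimizing
`Σᵢ (λᵢ·Δᵢ/2 + Cᵢ/(bᵢ·Δᵢ))` over `Δᵢ > 0`, `bᵢ > 0` with `Σᵢ bᵢ ≤ B` is attained
exactly at `bᵢ* = B·(λᵢCᵢ)^{1/3}/Σⱼ(λⱼCⱼ)^{1/3}` and `Δᵢ* = √(2Cᵢ/(λᵢ·bᵢ*))`,
with minimal value `√(2/B)·(Σᵢ(λᵢCᵢ)^{1/3})^{3/2}`. -/
theorem stmt3 (K : ℕ) (hK : 1 ≤ K)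
    (lam c : Fin K → ℝ) (hlam : ∀ i, 0 < lam i) (hc : ∀ i, 0 < c i)
    (B : ℝ) (hB : 0 < B)
    (F : (Fin K → ℝ) → (Fin K → ℝ) → ℝ)
    (hF : ∀ Δ b, F Δ b = ∑ i, (lam i * Δ i / 2 + c i / (b i * Δ i)))
    (S : ℝ) (hS : S = ∑ j, (lam j * c j) ^ ((1 : ℝ) / 3))
    (bstar : Fin K → ℝ) (hbstar : ∀ i, bstar i = B * (lam i * c i) ^ ((1 : ℝ) / 3) / S)
    (Δstar : Fin K → ℝ) (hΔstar : ∀ i, Δstar i = Real.sqrt (2 * c i / (lam i * bstar i))) :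
    (∀ i, 0 < bstar i) ∧ (∀ i, 0 < Δstar i) ∧ (∑ i, bstar i ≤ B) ∧
    (∀ Δ b : Fin K → ℝ, (∀ i, 0 < Δ i) → (∀ i, 0 < b i) → ∑ i, b i ≤ B →
      F Δstar bstar ≤ F Δ b) ∧
    (∀ Δ b : Fin K → ℝ, (∀ i, 0 < Δ i) → (∀ i, 0 < b i) → ∑ i, b i ≤ B →
      F Δ b = F Δstar bstar → Δ = Δstar ∧ b = bstar) ∧
    F Δstar bstar = Real.sqrt (2 / B) * S ^ ((3 : ℝ) / 2) := by
  haveI : Nonempty (Fin K) := ⟨⟨0, hK⟩⟩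
  obtain ⟨u, hu_def⟩ : ∃ u : Fin K → ℝ, u = fun i => (lam i * c i) ^ ((1:ℝ)/3) := ⟨_, rfl⟩
  have hu0 : ∀ i, 0 < u i := fun i => by simp only [hu_def]; exact Real.rpow_pos_of_pos (mul_pos (hlam i) (hc i)) _
  have hu3 : ∀ i, (u i)^(3:ℕ) = lam i * c i := by
    intro i
    simp only [hu_def]
    rw [← Real.rpow_natCast ((lam i * c i) ^ ((1:ℝ)/3)) 3,
      ← Real.rpow_mul (mul_pos (hlam i) (hc i)).le]
    norm_num
  have hS' : S = ∑ j, u j := by simp only [hu_def]; exact hS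
  have hS0 : 0 < S := by
    rw [hS']
    exact Finset.sum_pos (fun i _ => hu0 i) Finset.univ_nonempty
  have hb' : ∀ i, bstar i = B * u i / S := fun i => by simp only [hu_def]; exact hbstar i
  have hbpos : ∀ i, 0 < bstar i := fun i => by
    rw [hb' i]; exact div_pos (mul_pos hB (hu0 i)) hS0
  have hΔpos : ∀ i, 0 < Δstar i := fun i => by
    rw [hΔstar i]
    exact Real.sqrt_pos.mpr (div_pos (by linarith [hc i]) (mul_pos (hlam i) (hbpos i)))
  have hsumb : ∑ i, bstar i = B := by
    have : ∀ i ∈ Finset.univ, bstar i = (B/S) * u i := fun i _ => by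
      rw [hb' i]; ring
    rw [Finset.sum_congr rfl this, ← Finset.mul_sum, ← hS']
    field_simp
  obtain ⟨a, ha_def⟩ : ∃ a : Fin K → ℝ, a = fun i => Real.sqrt (2 * lam i * c i) := ⟨_, rfl⟩
  have hapos : ∀ i, 0 < a i := fun i =>
    by simp only [ha_def]; exact Real.sqrt_pos.mpr (by nlinarith [hlam i, hc i, mul_pos (hlam i) (hc i)])
  have ha1 : ∀ i, a i = Real.sqrt 2 * (u i * Real.sqrt (u i)) := by
    intro i
    have h1 : 2 * lam i * c i = 2 * ((u i)^2 * u i) := by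
      rw [show (u i)^2 * u i = (u i)^(3:ℕ) by ring, hu3 i]; ring
    simp only [ha_def]
    rw [h1, Real.sqrt_mul (by norm_num), Real.sqrt_mul (sq_nonneg (u i)),
      Real.sqrt_sq (hu0 i).le]
  have ha2 : ∀ i, Real.sqrt (bstar i) = Real.sqrt B * Real.sqrt (u i) / Real.sqrt S := by
    intro i
    rw [hb' i, Real.sqrt_div (mul_nonneg hB.le (hu0 i).le), Real.sqrt_mul hB.le]
  have hsB : 0 < Real.sqrt B := Real.sqrt_pos.mpr hB
  have hsS : 0 < Real.sqrt S := Real.sqrt_pos.mpr hS0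
  obtain ⟨w, hw_def⟩ : ∃ w : ℝ, w = Real.sqrt 2 * Real.sqrt S / Real.sqrt B := ⟨_, rfl⟩
  have hwpos : 0 < w := by
    rw [hw_def]
    exact div_pos (mul_pos (Real.sqrt_pos.mpr two_pos) hsS) hsB
  have hti : ∀ i, a i / Real.sqrt (bstar i) = w * u i := by
    intro i
    have hsu : 0 < Real.sqrt (u i) := Real.sqrt_pos.mpr (hu0 i)
    rw [ha1 i, ha2 i, hw_def]
    field_simp
  have hV : (∑ i, a i / Real.sqrt (bstar i)) = w * S := by
    rw [Finset.sum_congr rfl (fun i _ => hti i), ← Finset.mul_sum, ← hS']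
  obtain ⟨mm, hmm_def⟩ : ∃ mm : ℝ, mm = w * S / (2 * B) := ⟨_, rfl⟩
  have hmmpos : 0 < mm := by
    rw [hmm_def]
    exact div_pos (mul_pos hwpos hS0) (by linarith)
  have hm : ∀ i, a i = 2 * mm * (Real.sqrt (bstar i))^3 := by
    intro i
    have hvv : 0 < Real.sqrt (bstar i) := Real.sqrt_pos.mpr (hbpos i)
    have hcube : (Real.sqrt (bstar i))^3 = bstar i * Real.sqrt (bstar i) := by
      rw [pow_succ, Real.sq_sqrt (hbpos i).le]
    have hai : a i = w * u i * Real.sqrt (bstar i) := by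
      have := hti i
      rw [div_eq_iff hvv.ne'] at this
      exact this
    rw [hcube, hai, hmm_def, hb' i]
    field_simp
  have hq' : ∀ i, 0 < c i / bstar i := fun i => div_pos (hc i) (hbpos i)
  have hFstar : F Δstar bstar = ∑ i, a i / Real.sqrt (bstar i) := by
    rw [hF]
    refine Finset.sum_congr rfl (fun i _ => ?_)
    have hΔeq : Δstar i = Real.sqrt (2 * (c i / bstar i) / lam i) := by
      rw [hΔstar i]
      congr 1
      ring
    have hsq : Real.sqrt (2 * lam i * (c i / bstar i)) = a i / Real.sqrt (bstar i) := by
      simp only [ha_def]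
      rw [show 2 * lam i * (c i / bstar i) = (2 * lam i * c i) / bstar i by ring,
        Real.sqrt_div (by nlinarith [mul_pos (hlam i) (hc i)])]
    calc lam i * Δstar i / 2 + c i / (bstar i * Δstar i)
        = lam i * Δstar i / 2 + (c i / bstar i) / Δstar i := by rw [div_div]
      _ = Real.sqrt (2 * lam i * (c i / bstar i)) := by
          rw [hΔeq]; exact amgm_at (lam i) (c i / bstar i) (hlam i) (hq' i)
      _ = a i / Real.sqrt (bstar i) := hsq
  have main : ∀ Δ b : Fin K → ℝ, (∀ i, 0 < Δ i) → (∀ i, 0 < b i) → ∑ i, b i ≤ B →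
      F Δstar bstar ≤ F Δ b ∧ (F Δ b = F Δstar bstar → Δ = Δstar ∧ b = bstar) := by
    intro Δ b hΔp hbp hsum
    have hqb : ∀ i, 0 < c i / b i := fun i => div_pos (hc i) (hbp i)
    have hsqb : ∀ i, Real.sqrt (2 * lam i * (c i / b i)) = a i / Real.sqrt (b i) := by
      intro i
      simp only [ha_def]
      rw [show 2 * lam i * (c i / b i) = (2 * lam i * c i) / b i by ring,
        Real.sqrt_div (by nlinarith [mul_pos (hlam i) (hc i)])]
    have hmid : ∀ i, a i / Real.sqrt (b i) ≤ lam i * Δ i / 2 + c i / (b i * Δ i) := by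
      intro i
      have h := amgm_le (lam i) (c i / b i) (Δ i) (hlam i) (hqb i) (hΔp i)
      rw [hsqb i, div_div] at h
      exact h
    have hlowid : ∀ i, a i / Real.sqrt (bstar i) - mm * (b i - bstar i)
        = a i * (1 / Real.sqrt (bstar i)
          - ((Real.sqrt (b i))^2 - (Real.sqrt (bstar i))^2) / (2 * (Real.sqrt (bstar i))^3)) := by
      intro i
      have hvv : 0 < Real.sqrt (bstar i) := Real.sqrt_pos.mpr (hbpos i)
      have h1 : (Real.sqrt (b i))^2 = b i := Real.sq_sqrt (hbp i).le
      have h2 : (Real.sqrt (bstar i))^2 = bstar i := Real.sq_sqrt (hbpos i).le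
      have h3 : mm = a i / (2 * (Real.sqrt (bstar i))^3) := by
        rw [eq_div_iff (by positivity), hm i]; ring
      rw [h1, h2, h3]
      field_simp
    have hlow : ∀ i, a i / Real.sqrt (bstar i) - mm * (b i - bstar i)
        ≤ a i / Real.sqrt (b i) := by
      intro i
      have huu : 0 < Real.sqrt (b i) := Real.sqrt_pos.mpr (hbp i)
      have hvv : 0 < Real.sqrt (bstar i) := Real.sqrt_pos.mpr (hbpos i)
      have hid := tangent_id (Real.sqrt (b i)) (Real.sqrt (bstar i)) huu hvv
      have hnn : (0:ℝ) ≤ (Real.sqrt (b i) - Real.sqrt (bstar i))^2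
          * (Real.sqrt (b i) + 2 * Real.sqrt (bstar i))
          / (2 * Real.sqrt (b i) * (Real.sqrt (bstar i))^3) := by positivity
      rw [hlowid i]
      have hstep : 1 / Real.sqrt (bstar i)
          - ((Real.sqrt (b i))^2 - (Real.sqrt (bstar i))^2) / (2 * (Real.sqrt (bstar i))^3)
          ≤ 1 / Real.sqrt (b i) := by linarith [hid ▸ hnn]
      calc a i * _ ≤ a i * (1 / Real.sqrt (b i)) :=
            mul_le_mul_of_nonneg_left hstep (hapos i).le
        _ = a i / Real.sqrt (b i) := by ring
    have hsumlow : ∑ i, (a i / Real.sqrt (bstar i) - mm * (b i - bstar i))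
        = (∑ i, a i / Real.sqrt (bstar i)) + mm * (B - ∑ i, b i) := by
      rw [Finset.sum_sub_distrib, ← Finset.mul_sum, Finset.sum_sub_distrib, hsumb]
      ring
    have hVlelow : (∑ i, a i / Real.sqrt (bstar i))
        ≤ ∑ i, (a i / Real.sqrt (bstar i) - mm * (b i - bstar i)) := by
      rw [hsumlow]
      nlinarith [hmmpos, hsum]
    have hlowlemid : ∑ i, (a i / Real.sqrt (bstar i) - mm * (b i - bstar i))
        ≤ ∑ i, a i / Real.sqrt (b i) :=
      Finset.sum_le_sum (fun i _ => hlow i)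
    have hmidleF : ∑ i, a i / Real.sqrt (b i) ≤ F Δ b := by
      rw [hF]
      exact Finset.sum_le_sum (fun i _ => hmid i)
    have hle : F Δstar bstar ≤ F Δ b := by
      rw [hFstar]
      exact le_trans hVlelow (le_trans hlowlemid hmidleF)
    refine ⟨hle, fun heq => ?_⟩
    have hVF : F Δ b = ∑ i, a i / Real.sqrt (bstar i) := by rw [heq, hFstar]
    have e1 : ∑ i, (a i / Real.sqrt (bstar i) - mm * (b i - bstar i))
        = ∑ i, a i / Real.sqrt (b i) := by
      linarith [hVlelow, hlowlemid, hmidleF, hVF]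
    have e2 : ∑ i, a i / Real.sqrt (b i) = F Δ b := by
      linarith [hVlelow, hlowlemid, hmidleF, hVF]
    have hbeq : ∀ i, b i = bstar i := by
      intro i
      have hti2 := (Finset.sum_eq_sum_iff_of_le (fun i _ => hlow i)).mp e1 i (Finset.mem_univ i)
      have huu : 0 < Real.sqrt (b i) := Real.sqrt_pos.mpr (hbp i)
      have hvv : 0 < Real.sqrt (bstar i) := Real.sqrt_pos.mpr (hbpos i)
      have hid := tangent_id (Real.sqrt (b i)) (Real.sqrt (bstar i)) huu hvv
      rw [hlowid i] at hti2
      have h0 : 1 / Real.sqrt (bstar i)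
          - ((Real.sqrt (b i))^2 - (Real.sqrt (bstar i))^2) / (2 * (Real.sqrt (bstar i))^3)
          = 1 / Real.sqrt (b i) :=
        mul_left_cancel₀ (hapos i).ne' (by rw [hti2]; rw [mul_one_div])
      have hz : (Real.sqrt (b i) - Real.sqrt (bstar i))^2
          * (Real.sqrt (b i) + 2 * Real.sqrt (bstar i))
          / (2 * Real.sqrt (b i) * (Real.sqrt (bstar i))^3) = 0 := by
        rw [← hid, h0]; ring
      have hz2 : (Real.sqrt (b i) - Real.sqrt (bstar i))^2
          * (Real.sqrt (b i) + 2 * Real.sqrt (bstar i)) = 0 := by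
        rcases div_eq_zero_iff.mp hz with h | h
        · exact h
        · exfalso; nlinarith [huu, hvv, pow_pos hvv 3]
      have hz3 : Real.sqrt (b i) = Real.sqrt (bstar i) := by
        rcases mul_eq_zero.mp hz2 with h | h
        · have h' := pow_eq_zero_iff (n := 2) (by norm_num) |>.mp h
          linarith [sub_eq_zero.mp h']
        · nlinarith
      calc b i = (Real.sqrt (b i))^2 := (Real.sq_sqrt (hbp i).le).symm
        _ = (Real.sqrt (bstar i))^2 := by rw [hz3]
        _ = bstar i := Real.sq_sqrt (hbpos i).le
    have hΔeq : ∀ i, Δ i = Δstar i := by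
      intro i
      have hterm := (Finset.sum_eq_sum_iff_of_le (fun i _ => hmid i)).mp
        (by rw [e2, hF]) i (Finset.mem_univ i)
      have h1 : lam i * Δ i / 2 + (c i / b i) / Δ i
          = Real.sqrt (2 * lam i * (c i / b i)) := by
        rw [div_div, ← hterm, hsqb i]
      have h2 := amgm_eq (lam i) (c i / b i) (Δ i) (hlam i) (hqb i) (hΔp i) h1
      rw [h2, hΔstar i, hbeq i]
      congr 1
      ring
    exact ⟨funext hΔeq, funext hbeq⟩
  have hval : F Δstar bstar = Real.sqrt (2 / B) * S ^ ((3:ℝ)/2) := by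
    rw [hFstar, hV]
    rw [show (3:ℝ)/2 = 1 + 1/2 by norm_num, Real.rpow_add hS0, Real.rpow_one,
      ← Real.sqrt_eq_rpow, Real.sqrt_div (by norm_num : (0:ℝ) ≤ 2), hw_def]
    ring
  exact ⟨hbpos, hΔpos, le_of_eq hsumb,
    fun Δ b h1 h2 h3 => (main Δ b h1 h2 h3).1,
    fun Δ b h1 h2 h3 heq => (main Δ b h1 h2 h3).2 heq, hval⟩
end

section
/- Let K ≥ 1, let λ_i > 0, C_i > 0, and per-job bandwidth caps W_i > 0 for i = 1, …, K, and let B > 0 satisfy B ≤ Σ_{i=1}^{K} W_i. Then the minimization of Σ_{i=1}^{K} √(2λ_i C_i / b_i) over {b : 0 < b_i ≤ W_i, Σ_i b_i ≤ B} has a unique global minimizer b*, and there exists t > 0 such that b_i* = min(W_i, t·(λ_i C_i)^{1/3}) for every i, with Σ_{i=1}^{K} b_i* = B. -/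
open Finset

private lemma grad_strict (d x y : ℝ) (hd : 0 < d) (hx : 0 < x) (hy : 0 < y) (hne : y ≠ x) :
    Real.sqrt (d/x) - Real.sqrt d / (2 * (x * Real.sqrt x)) * (y - x) < Real.sqrt (d/y) := by
  obtain ⟨p, hp, rfl⟩ : ∃ p, 0 < p ∧ x = p ^ 2 :=
    ⟨Real.sqrt x, Real.sqrt_pos.mpr hx, (Real.sq_sqrt hx.le).symm⟩
  obtain ⟨q, hq, rfl⟩ : ∃ q, 0 < q ∧ y = q ^ 2 :=
    ⟨Real.sqrt y, Real.sqrt_pos.mpr hy, (Real.sq_sqrt hy.le).symm⟩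
  obtain ⟨r, hr, rfl⟩ : ∃ r, 0 < r ∧ d = r ^ 2 :=
    ⟨Real.sqrt d, Real.sqrt_pos.mpr hd, (Real.sq_sqrt hd.le).symm⟩
  have hpq : p ≠ q := fun h => hne (by rw [h])
  have e1 : Real.sqrt (r^2 / p^2) = r / p := by
    rw [← div_pow, Real.sqrt_sq (by positivity)]
  have e2 : Real.sqrt (r^2 / q^2) = r / q := by
    rw [← div_pow, Real.sqrt_sq (by positivity)]
  have e3 : Real.sqrt (r^2) = r := Real.sqrt_sq hr.le
  have e4 : Real.sqrt (p^2) = p := Real.sqrt_sq hp.le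
  rw [e1, e2, e3, e4]
  rw [div_mul_eq_mul_div, div_sub_div _ _ (by positivity : p ≠ (0:ℝ))
      (by positivity : (2:ℝ) * (p^2*p) ≠ 0),
      div_lt_div_iff₀ (by positivity) hq]
  nlinarith [mul_pos (mul_pos (sq_pos_of_ne_zero (sub_ne_zero.mpr hpq))
      (by linarith : (0:ℝ) < 2*p + q)) hr, sq_nonneg (p - q), mul_pos hp hq]

private lemma grad_le (d x y : ℝ) (hd : 0 < d) (hx : 0 < x) (hy : 0 < y) :
    Real.sqrt (d/x) - Real.sqrt d / (2 * (x * Real.sqrt x)) * (y - x) ≤ Real.sqrt (d/y) := by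
  rcases eq_or_ne y x with h | h
  · subst h; simp
  · exact (grad_strict d x y hd hx hy h).le

/-- Box-constrained (water-filling) allocation. With caps `Wᵢ > 0`
and budget `B ≤ Σᵢ Wᵢ`, the minimization of `Σᵢ √(2λᵢCᵢ/bᵢ)` over
`{b : 0 < bᵢ ≤ Wᵢ, Σᵢ bᵢ ≤ B}` has a unique global minimizer `b*`, and there is
`t > 0` with `bᵢ* = min Wᵢ (t·(λᵢCᵢ)^{1/3})` for all `i` and `Σᵢ bᵢ* = B`. -/
theorem stmt6 (K : ℕ) (hK : 1 ≤ K)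
    (lam c W : Fin K → ℝ) (hlam : ∀ i, 0 < lam i) (hc : ∀ i, 0 < c i)
    (hW : ∀ i, 0 < W i)
    (B : ℝ) (hB : 0 < B) (hBW : B ≤ ∑ i, W i)
    (g : (Fin K → ℝ) → ℝ)
    (hg : ∀ b, g b = ∑ i, Real.sqrt (2 * lam i * c i / b i)) :
    ∃ bstar : Fin K → ℝ,
      ((∀ i, 0 < bstar i ∧ bstar i ≤ W i) ∧ ∑ i, bstar i ≤ B) ∧
      (∀ b : Fin K → ℝ, ((∀ i, 0 < b i ∧ b i ≤ W i) ∧ ∑ i, b i ≤ B) →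
        g bstar ≤ g b) ∧
      (∀ b : Fin K → ℝ, ((∀ i, 0 < b i ∧ b i ≤ W i) ∧ ∑ i, b i ≤ B) →
        (∀ b' : Fin K → ℝ, ((∀ i, 0 < b' i ∧ b' i ≤ W i) ∧ ∑ i, b' i ≤ B) →
          g b ≤ g b') → b = bstar) ∧
      (∃ t : ℝ, 0 < t ∧
        ∀ i, bstar i = min (W i) (t * (lam i * c i) ^ ((1 : ℝ) / 3))) ∧
      ∑ i, bstar i = B := by
  have : Nonempty (Fin K) := ⟨⟨0, hK⟩⟩
  set a : Fin K → ℝ := fun i => (lam i * c i) ^ ((1:ℝ)/3) with ha_def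
  have ha : ∀ i, 0 < a i := fun i => Real.rpow_pos_of_pos (mul_pos (hlam i) (hc i)) _
  have ha3 : ∀ i, a i ^ 3 = lam i * c i := by
    intro i
    have hpos := (mul_pos (hlam i) (hc i)).le
    rw [ha_def]
    rw [← Real.rpow_natCast ((lam i * c i) ^ ((1:ℝ)/3)) 3, ← Real.rpow_mul hpos]
    norm_num
  -- find the water level t by IVT
  set T := ∑ i, W i / a i with hT_def
  have hT0 : 0 < T := Finset.sum_pos (fun i _ => div_pos (hW i) (ha i)) univ_nonempty
  have hTa : ∀ i, W i ≤ T * a i := by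
    intro i
    have h1 : W i / a i ≤ T :=
      Finset.single_le_sum (f := fun j => W j / a j) (fun j _ => (div_pos (hW j) (ha j)).le) (mem_univ i)
    calc W i = (W i / a i) * a i := (div_mul_cancel₀ _ (ha i).ne').symm
    _ ≤ T * a i := mul_le_mul_of_nonneg_right h1 (ha i).le
  set S : ℝ → ℝ := fun t => ∑ i, min (W i) (t * a i) with hS_def
  have hScont : Continuous S := by
    apply continuous_finset_sum
    exact fun i _ => continuous_const.min (continuous_id.mul continuous_const)
  have hS0 : S 0 = 0 := by
    simp only [hS_def, zero_mul]
    exact Finset.sum_eq_zero fun i _ => min_eq_right (hW i).le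
  have hST : S T = ∑ i, W i := Finset.sum_congr rfl fun i _ => min_eq_left (hTa i)
  have hBmem : B ∈ Set.Icc (S 0) (S T) :=
    ⟨by rw [hS0]; exact hB.le, by rw [hST]; exact hBW⟩
  obtain ⟨t, htmem, hSt⟩ := intermediate_value_Icc hT0.le hScont.continuousOn hBmem
  have ht0 : 0 < t := by
    rcases htmem.1.lt_or_eq with h | h
    · exact h
    · exfalso; rw [← h] at hSt; rw [hS0] at hSt; linarith
  set bstar : Fin K → ℝ := fun i => min (W i) (t * a i) with hbstar_def
  have hbpos : ∀ i, 0 < bstar i := fun i => lt_min (hW i) (mul_pos ht0 (ha i))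
  have hbW : ∀ i, bstar i ≤ W i := fun i => min_le_left _ _
  have hbta : ∀ i, bstar i ≤ t * a i := fun i => min_le_right _ _
  have hsum : ∑ i, bstar i = B := hSt
  -- the common slope
  set μ : ℝ := Real.sqrt 2 / (2 * (t * Real.sqrt t)) with hμ_def
  have hμ0 : 0 < μ := by
    have h1 : (0:ℝ) < Real.sqrt t := Real.sqrt_pos.mpr ht0
    have h2 : (0:ℝ) < Real.sqrt 2 := Real.sqrt_pos.mpr (by norm_num)
    positivity
  set d : Fin K → ℝ := fun i => 2 * lam i * c i with hd_def
  have hd0 : ∀ i, 0 < d i := fun i => by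
    have := hlam i; have := hc i; simp only [hd_def]; positivity
  have hsd : ∀ i, Real.sqrt (d i) = Real.sqrt 2 * (a i * Real.sqrt (a i)) := by
    intro i
    have h1 : d i = 2 * (a i ^ 3) := by simp only [hd_def]; rw [ha3]; ring
    have h2 : a i ^ 3 = (a i)^2 * a i := by ring
    rw [h1, Real.sqrt_mul (by norm_num : (0:ℝ) ≤ 2), h2,
        Real.sqrt_mul (sq_nonneg _), Real.sqrt_sq (ha i).le]
  -- slope at the unconstrained point equals μ
  have hslope_eq : ∀ i, Real.sqrt (d i) / (2 * ((t * a i) * Real.sqrt (t * a i))) = μ := by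
    intro i
    have hst : (0:ℝ) < Real.sqrt t := Real.sqrt_pos.mpr ht0
    have hsa : (0:ℝ) < Real.sqrt (a i) := Real.sqrt_pos.mpr (ha i)
    have hai := ha i
    rw [hsd i, Real.sqrt_mul ht0.le, hμ_def,
        div_eq_div_iff (by positivity) (by positivity)]
    ring
  -- slope at bstar i dominates μ
  have hslope_ge : ∀ i, μ ≤ Real.sqrt (d i) / (2 * (bstar i * Real.sqrt (bstar i))) := by
    intro i
    rw [← hslope_eq i]
    have h1 : bstar i * Real.sqrt (bstar i) ≤ (t * a i) * Real.sqrt (t * a i) :=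
      mul_le_mul (hbta i) (Real.sqrt_le_sqrt (hbta i)) (Real.sqrt_nonneg _)
        (mul_pos ht0 (ha i)).le
    have h2 : (0:ℝ) < 2 * (bstar i * Real.sqrt (bstar i)) := by
      have e1 := hbpos i
      have e2 := Real.sqrt_pos.mpr (hbpos i)
      positivity
    gcongr

  -- per-coordinate sign inequality
  have hsign : ∀ i (y : ℝ), y ≤ W i →
      μ * (bstar i - y) ≤ Real.sqrt (d i) / (2 * (bstar i * Real.sqrt (bstar i))) * (bstar i - y) := by
    intro i y hy
    rcases le_or_gt (t * a i) (W i) with h | h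
    · have hb : bstar i = t * a i := min_eq_right h
      rw [hb, hslope_eq i]
    · have hb : bstar i = W i := min_eq_left h.le
      have hdiff : 0 ≤ bstar i - y := by rw [hb]; linarith
      exact mul_le_mul_of_nonneg_right (hslope_ge i) hdiff
  -- per-coordinate gradient bounds
  have coord_le : ∀ i (y : ℝ), 0 < y → y ≤ W i →
      Real.sqrt (d i / bstar i) + μ * (bstar i - y) ≤ Real.sqrt (d i / y) := by
    intro i y hy hyW
    have h1 := grad_le (d i) (bstar i) y (hd0 i) (hbpos i) hy
    have h2 := hsign i y hyW
    nlinarith [h1, h2]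
  have coord_lt : ∀ i (y : ℝ), 0 < y → y ≤ W i → y ≠ bstar i →
      Real.sqrt (d i / bstar i) + μ * (bstar i - y) < Real.sqrt (d i / y) := by
    intro i y hy hyW hne
    have h1 := grad_strict (d i) (bstar i) y (hd0 i) (hbpos i) hy hne
    have h2 := hsign i y hyW
    nlinarith [h1, h2]
  -- global optimality (weak)
  have hopt : ∀ b : Fin K → ℝ, ((∀ i, 0 < b i ∧ b i ≤ W i) ∧ ∑ i, b i ≤ B) →
      g bstar ≤ g b := by
    intro b ⟨hfeas, hbsum⟩
    have h1 : ∑ i, (Real.sqrt (d i / bstar i) + μ * (bstar i - b i)) ≤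
        ∑ i, Real.sqrt (d i / b i) :=
      Finset.sum_le_sum fun i _ => coord_le i (b i) (hfeas i).1 (hfeas i).2
    have h2 : ∑ i, (Real.sqrt (d i / bstar i) + μ * (bstar i - b i)) =
        (∑ i, Real.sqrt (d i / bstar i)) + μ * (B - ∑ i, b i) := by
      rw [Finset.sum_add_distrib, ← Finset.mul_sum, Finset.sum_sub_distrib, hsum]
    have h3 : 0 ≤ μ * (B - ∑ i, b i) := mul_nonneg hμ0.le (by linarith)
    rw [hg, hg]
    simp only [hd_def] at h1 h2
    linarith
  -- strict optimality at any other point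
  have hstrict : ∀ b : Fin K → ℝ, (∀ i, 0 < b i ∧ b i ≤ W i) → ∑ i, b i ≤ B →
      b ≠ bstar → g bstar < g b := by
    intro b hfeas hbsum hne
    obtain ⟨j, hj⟩ := Function.ne_iff.mp hne
    have h1 : ∑ i, (Real.sqrt (d i / bstar i) + μ * (bstar i - b i)) <
        ∑ i, Real.sqrt (d i / b i) := by
      refine Finset.sum_lt_sum (fun i _ => coord_le i (b i) (hfeas i).1 (hfeas i).2)
        ⟨j, mem_univ j, coord_lt j (b j) (hfeas j).1 (hfeas j).2 hj⟩
    have h2 : ∑ i, (Real.sqrt (d i / bstar i) + μ * (bstar i - b i)) =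
        (∑ i, Real.sqrt (d i / bstar i)) + μ * (B - ∑ i, b i) := by
      rw [Finset.sum_add_distrib, ← Finset.mul_sum, Finset.sum_sub_distrib, hsum]
    have h3 : 0 ≤ μ * (B - ∑ i, b i) := mul_nonneg hμ0.le (by linarith)
    rw [hg, hg]
    simp only [hd_def] at h1 h2
    linarith
  refine ⟨bstar, ⟨fun i => ⟨hbpos i, hbW i⟩, hsum.le⟩, hopt, ?_, ⟨t, ht0, fun i => rfl⟩, hsum⟩
  intro b hbfeas hbmin
  by_contra hne
  have h1 := hstrict b hbfeas.1 hbfeas.2 hne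
  have h2 := hbmin bstar ⟨fun i => ⟨hbpos i, hbW i⟩, hsum.le⟩
  linarith
end

section
/- Let K ≥ 1, let λ_i > 0, C_i > 0, and caps W_i > 0 for i = 1, …, K, and let B > 0 satisfy B ≤ Σ_{i=1}^{K} W_i. Suppose the unconstrained cube-root allocation of job i exceeds its cap, i.e., B·(λ_i C_i)^{1/3} / Σ_{j=1}^{K} (λ_j C_j)^{1/3} > W_i. Then the unique global minimizer b* of Σ_{j=1}^{K} √(2λ_j C_j / b_j) over {b : 0 < b_j ≤ W_j, Σ_j b_j ≤ B} satisfies b_i* = W_i (the cap on job i is active at the box-constrained optimum). -/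
open Finset Real Filter

lemma aux_deriv (Ai Aj bi bj δ : ℝ) (hAi : 0 < Ai) (hAj : 0 < Aj)
    (hbi : 0 < bi) (hbj : 0 < bj) (hδ : 0 < δ)
    (hlt : Aj * bi ^ 3 < Ai * bj ^ 3) :
    ∃ t : ℝ, 0 < t ∧ t < δ ∧
      Real.sqrt Ai * (Real.sqrt (bi + t))⁻¹ + Real.sqrt Aj * (Real.sqrt (bj - t))⁻¹ <
      Real.sqrt Ai * (Real.sqrt bi)⁻¹ + Real.sqrt Aj * (Real.sqrt bj)⁻¹ := by
  set f : ℝ → ℝ := fun t => Real.sqrt Ai * (Real.sqrt (bi + t))⁻¹ +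
    Real.sqrt Aj * (Real.sqrt (bj - t))⁻¹ with hf
  have hbi0 : bi + 0 ≠ 0 := by linarith
  have hbj0 : bj - 0 ≠ 0 := by linarith
  have h1 : HasDerivAt (fun t : ℝ => bi + t) 1 0 := (hasDerivAt_id 0).const_add bi
  have h2 : HasDerivAt (fun t : ℝ => Real.sqrt (bi + t)) (1 / (2 * Real.sqrt (bi + 0)) * 1) 0 :=
    (Real.hasDerivAt_sqrt hbi0).comp 0 h1
  have hsbi : Real.sqrt (bi + 0) ≠ 0 := by
    simp only [add_zero]; exact ne_of_gt (Real.sqrt_pos.2 hbi)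
  have h3 := (h2.inv hsbi).const_mul (Real.sqrt Ai)
  have h4 : HasDerivAt (fun t : ℝ => bj - t) (-1) 0 := (hasDerivAt_id 0).const_sub bj
  have h5 : HasDerivAt (fun t : ℝ => Real.sqrt (bj - t)) (1 / (2 * Real.sqrt (bj - 0)) * (-1)) 0 :=
    (Real.hasDerivAt_sqrt hbj0).comp 0 h4
  have hsbj : Real.sqrt (bj - 0) ≠ 0 := by
    simp only [sub_zero]; exact ne_of_gt (Real.sqrt_pos.2 hbj)
  have h6 := (h5.inv hsbj).const_mul (Real.sqrt Aj)
  have hf' : HasDerivAt f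
      (Real.sqrt Ai * (-(1 / (2 * Real.sqrt (bi + 0)) * 1) / Real.sqrt (bi + 0) ^ 2) +
       Real.sqrt Aj * (-(1 / (2 * Real.sqrt (bj - 0)) * (-1)) / Real.sqrt (bj - 0) ^ 2)) 0 :=
    h3.add h6
  set D := Real.sqrt Ai * (-(1 / (2 * Real.sqrt (bi + 0)) * 1) / Real.sqrt (bi + 0) ^ 2) +
       Real.sqrt Aj * (-(1 / (2 * Real.sqrt (bj - 0)) * (-1)) / Real.sqrt (bj - 0) ^ 2) with hD
  have hDneg : D < 0 := by
    rw [hD]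
    simp only [add_zero, sub_zero, mul_one, neg_neg, mul_neg]
    have hsq : ∀ x : ℝ, 0 < x → Real.sqrt x ^ 2 = x := fun x hx => Real.sq_sqrt hx.le
    rw [hsq bi hbi, hsq bj hbj]
    have key : Real.sqrt Aj * (1 / (2 * Real.sqrt bj) / bj) <
        Real.sqrt Ai * (1 / (2 * Real.sqrt bi) / bi) := by
      have hsbi' : 0 < Real.sqrt bi := Real.sqrt_pos.2 hbi
      have hsbj' : 0 < Real.sqrt bj := Real.sqrt_pos.2 hbj
      rw [div_div, div_div, mul_one_div, mul_one_div, div_lt_div_iff₀ (by positivity) (by positivity)]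
      have e1 : Real.sqrt Aj * Real.sqrt (bi^3) < Real.sqrt Ai * Real.sqrt (bj^3) := by
        rw [← Real.sqrt_mul hAj.le, ← Real.sqrt_mul hAi.le]
        exact Real.sqrt_lt_sqrt (by positivity) hlt
      have e2 : Real.sqrt (bi^3) = Real.sqrt bi * bi := by
        rw [pow_succ, Real.sqrt_mul (by positivity), Real.sqrt_sq hbi.le]; ring
      have e3 : Real.sqrt (bj^3) = Real.sqrt bj * bj := by
        rw [pow_succ, Real.sqrt_mul (by positivity), Real.sqrt_sq hbj.le]; ring
      rw [e2, e3] at e1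
      nlinarith
    have hre : Real.sqrt Ai * (-(1 / (2 * Real.sqrt bi)) / bi)
        = -(Real.sqrt Ai * (1 / (2 * Real.sqrt bi) / bi)) := by ring
    rw [hre]
    linarith
  have hfw : HasDerivWithinAt f D (Set.Ioi (0:ℝ)) 0 := hf'.hasDerivWithinAt
  have hslope : Tendsto (slope f 0) (nhdsWithin 0 (Set.Ioi (0:ℝ))) (nhds D) := by
    have := (hasDerivWithinAt_iff_tendsto_slope' (s := Set.Ioi (0:ℝ)) (f := f) (f' := D) (x := 0)
      (by simp)).1 hfw
    exact this
  have hev1 : ∀ᶠ t in nhdsWithin 0 (Set.Ioi (0:ℝ)), slope f 0 t < 0 :=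
    hslope.eventually (gt_mem_nhds hDneg)
  have hev2 : ∀ᶠ t in nhdsWithin 0 (Set.Ioi (0:ℝ)), t < δ := by
    filter_upwards [Ioo_mem_nhdsGT_of_mem (Set.mem_Ico.2 ⟨le_refl 0, hδ⟩)] with t ht
    exact ht.2
  have hev3 : ∀ᶠ t in nhdsWithin 0 (Set.Ioi (0:ℝ)), 0 < t :=
    eventually_mem_nhdsWithin.mono (fun t ht => ht)
  obtain ⟨t, ht1, ht2, ht3⟩ := (hev1.and (hev2.and hev3)).exists
  refine ⟨t, ht3, ht2, ?_⟩
  have hsl : t⁻¹ * (f t - f 0) < 0 := by simpa [slope] using ht1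
  have hnum : f t - f 0 < 0 := by
    have he : f t - f 0 = t * (t⁻¹ * (f t - f 0)) := by
      field_simp
    rw [he]; exact mul_neg_of_pos_of_neg ht3 hsl
  have hf0 : f 0 = Real.sqrt Ai * (Real.sqrt bi)⁻¹ + Real.sqrt Aj * (Real.sqrt bj)⁻¹ := by
    simp [hf]
  rw [← hf0]
  show f t < f 0
  linarith


lemma aux_sum_two {K : ℕ} (i j : Fin K) (hij : i ≠ j) (F : Fin K → ℝ)
    (h : ∀ k, k ≠ i → k ≠ j → F k = 0) : ∑ k, F k = F i + F j := by
  rw [← Finset.add_sum_erase _ F (Finset.mem_univ i),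
    ← Finset.add_sum_erase _ F (Finset.mem_erase.2 ⟨Ne.symm hij, Finset.mem_univ j⟩)]
  have : ∑ k ∈ (Finset.univ.erase i).erase j, F k = 0 := by
    apply Finset.sum_eq_zero
    intro k hk
    exact h k (Finset.mem_erase.1 (Finset.mem_erase.1 hk).2).1 (Finset.mem_erase.1 hk).1
  rw [this]; ring


/-- If the unconstrained cube-root allocation of job `i` exceeds its
cap, i.e. `B·(λᵢCᵢ)^{1/3}/Σⱼ(λⱼCⱼ)^{1/3} > Wᵢ`, then any global minimizer `b*`
of `Σⱼ √(2λⱼCⱼ/bⱼ)` over the box-constrained feasible set satisfies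
`bᵢ* = Wᵢ` (the cap on job `i` is active). -/
theorem stmt7 (K : ℕ) (hK : 1 ≤ K)
    (lam c W : Fin K → ℝ) (hlam : ∀ j, 0 < lam j) (hc : ∀ j, 0 < c j)
    (hW : ∀ j, 0 < W j)
    (B : ℝ) (hB : 0 < B) (hBW : B ≤ ∑ j, W j)
    (g : (Fin K → ℝ) → ℝ)
    (hg : ∀ b, g b = ∑ j, Real.sqrt (2 * lam j * c j / b j))
    (i : Fin K)
    (hexceed : W i < B * (lam i * c i) ^ ((1 : ℝ) / 3) /
      ∑ j, (lam j * c j) ^ ((1 : ℝ) / 3))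
    (bstar : Fin K → ℝ)
    (hfeas : (∀ j, 0 < bstar j ∧ bstar j ≤ W j) ∧ ∑ j, bstar j ≤ B)
    (hopt : ∀ b : Fin K → ℝ, ((∀ j, 0 < b j ∧ b j ≤ W j) ∧ ∑ j, b j ≤ B) →
      g bstar ≤ g b) :
    bstar i = W i := by
  set a : Fin K → ℝ := fun k => (lam k * c k) ^ ((1 : ℝ) / 3) with ha
  have hapos : ∀ k, 0 < a k := fun k =>
    Real.rpow_pos_of_pos (mul_pos (hlam k) (hc k)) _
  have hspos : 0 < ∑ k, a k :=
    Finset.sum_pos (fun k _ => hapos k) (Finset.univ_nonempty_iff.2 (by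
      exact Fin.pos_iff_nonempty.1 hK))
  -- cube of a
  have hacube : ∀ k, a k ^ 3 = lam k * c k := by
    intro k
    rw [ha]
    rw [← Real.rpow_natCast ((lam k * c k) ^ ((1:ℝ)/3)) 3,
      ← Real.rpow_mul (mul_pos (hlam k) (hc k)).le]
    norm_num
  have hA : ∀ k, 0 < 2 * lam k * c k := fun k =>
    mul_pos (mul_pos two_pos (hlam k)) (hc k)
  by_contra hne
  have hlt : bstar i < W i := lt_of_le_of_ne (hfeas.1 i).2 hne
  rcases lt_or_eq_of_le hfeas.2 with hsum | hsum
  · -- slack in the budget: increase bstar i a bit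
    set ε : ℝ := min (W i - bstar i) (B - ∑ j, bstar j) with hε
    have hεpos : 0 < ε := lt_min (by linarith) (by linarith)
    set b' : Fin K → ℝ := Function.update bstar i (bstar i + ε) with hb'
    have hb'i : b' i = bstar i + ε := Function.update_self i _ bstar
    have hb'k : ∀ k, k ≠ i → b' k = bstar k := fun k hk => Function.update_of_ne hk _ bstar
    have hfeas' : (∀ j, 0 < b' j ∧ b' j ≤ W j) ∧ ∑ j, b' j ≤ B := by
      constructor
      · intro k
        by_cases hk : k = i
        · subst hk
          rw [hb'i]
          constructor
          · linarith [(hfeas.1 k).1]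
          · have : ε ≤ W k - bstar k := min_le_left _ _
            linarith
        · rw [hb'k k hk]; exact hfeas.1 k
      · have : ∑ j, b' j = ∑ j, bstar j + ε := by
          rw [hb', Finset.sum_update_of_mem (Finset.mem_univ i),
            ← Finset.add_sum_erase _ bstar (Finset.mem_univ i), Finset.erase_eq]
          ring
        rw [this]
        have : ε ≤ B - ∑ j, bstar j := min_le_right _ _
        linarith
    have hglt : g b' < g bstar := by
      rw [hg, hg]
      apply Finset.sum_lt_sum
      · intro k _
        by_cases hk : k = i
        · subst hk
          rw [hb'i]
          apply Real.sqrt_le_sqrt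
          apply div_le_div_of_nonneg_left (hA k).le (hfeas.1 k).1
          linarith
        · rw [hb'k k hk]
      · refine ⟨i, Finset.mem_univ i, ?_⟩
        rw [hb'i]
        apply Real.sqrt_lt_sqrt
          (div_nonneg (hA i).le (by linarith [(hfeas.1 i).1, hεpos]))
        apply div_lt_div_of_pos_left (hA i) (hfeas.1 i).1
        linarith
    exact absurd (hopt b' hfeas') (not_le.2 hglt)
  · -- budget tight: transfer from an over-allocated job j to i
    have hBi : bstar i < B * a i / ∑ k, a k := lt_of_le_of_lt (hfeas.1 i).2 hexceed
    have hexj : ∃ j, B * a j / ∑ k, a k < bstar j := by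
      by_contra hco
      push_neg at hco
      have : ∑ k, bstar k < ∑ k, B * a k / ∑ k, a k :=
        Finset.sum_lt_sum (fun k _ => hco k) ⟨i, Finset.mem_univ i, hBi⟩
      have heq : ∑ k, B * a k / ∑ k, a k = B := by
        rw [← Finset.sum_div, ← Finset.mul_sum]
        field_simp
      rw [heq, hsum] at this
      exact lt_irrefl B this
    obtain ⟨j, hj⟩ := hexj
    have hij : i ≠ j := by
      rintro rfl
      exact absurd (lt_trans hBi hj) (lt_irrefl _)
    -- key cube inequality
    have hkey : (2 * lam j * c j) * bstar i ^ 3 < (2 * lam i * c i) * bstar j ^ 3 := by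
      have h1 : a j * bstar i < a i * bstar j := by
        have e1 : a j * bstar i < a j * (B * a i / ∑ k, a k) :=
          mul_lt_mul_of_pos_left hBi (hapos j)
        have e2 : a j * (B * a i / ∑ k, a k) = a i * (B * a j / ∑ k, a k) := by ring
        have e3 : a i * (B * a j / ∑ k, a k) < a i * bstar j :=
          mul_lt_mul_of_pos_left hj (hapos i)
        linarith
      have h2 : (a j * bstar i) ^ 3 < (a i * bstar j) ^ 3 := by
        apply pow_lt_pow_left₀ h1 (mul_nonneg (hapos j).le (hfeas.1 i).1.le)
        norm_num
      have h3 : (a j * bstar i) ^ 3 = (lam j * c j) * bstar i ^ 3 := by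
        rw [mul_pow, hacube]
      have h4 : (a i * bstar j) ^ 3 = (lam i * c i) * bstar j ^ 3 := by
        rw [mul_pow, hacube]
      rw [h3, h4] at h2
      linarith
    set δ : ℝ := min (W i - bstar i) (bstar j) with hδ
    have hδpos : 0 < δ := lt_min (by linarith) (hfeas.1 j).1
    obtain ⟨t, htpos, htδ, htlt⟩ := aux_deriv (2 * lam i * c i) (2 * lam j * c j)
      (bstar i) (bstar j) δ (hA i) (hA j)
      (hfeas.1 i).1 (hfeas.1 j).1 hδpos hkey
    have htWi : t < W i - bstar i := lt_of_lt_of_le htδ (min_le_left _ _)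
    have htbj : t < bstar j := lt_of_lt_of_le htδ (min_le_right _ _)
    set b' : Fin K → ℝ := Function.update (Function.update bstar i (bstar i + t)) j (bstar j - t)
      with hb'
    have hb'j : b' j = bstar j - t := Function.update_self j _ _
    have hb'i : b' i = bstar i + t := by
      rw [hb', Function.update_of_ne hij, Function.update_self]
    have hb'k : ∀ k, k ≠ i → k ≠ j → b' k = bstar k := by
      intro k hki hkj
      rw [hb', Function.update_of_ne hkj, Function.update_of_ne hki]
    have hsum' : ∑ k, b' k = ∑ k, bstar k := by
      have h0 : ∑ k, (b' k - bstar k) = (b' i - bstar i) + (b' j - bstar j) :=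
        aux_sum_two i j hij _ (fun k hki hkj => by rw [hb'k k hki hkj]; ring)
      have h1 : ∑ k, (b' k - bstar k) = ∑ k, b' k - ∑ k, bstar k := by
        rw [Finset.sum_sub_distrib]
      rw [h1, hb'i, hb'j] at h0
      linarith
    have hfeas' : (∀ k, 0 < b' k ∧ b' k ≤ W k) ∧ ∑ k, b' k ≤ B := by
      constructor
      · intro k
        by_cases hki : k = i
        · subst hki
          rw [hb'i]
          exact ⟨by linarith [(hfeas.1 k).1], by linarith⟩
        by_cases hkj : k = j
        · subst hkj
          rw [hb'j]
          exact ⟨by linarith, by linarith [(hfeas.1 k).2]⟩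
        · rw [hb'k k hki hkj]; exact hfeas.1 k
      · rw [hsum', hsum]
    have hterm : ∀ (A x : ℝ), 0 ≤ A → Real.sqrt (A / x) = Real.sqrt A * (Real.sqrt x)⁻¹ := by
      intro A x hA
      rw [Real.sqrt_div hA, div_eq_mul_inv]
    have hglt : g b' < g bstar := by
      rw [hg, hg]
      have hdiff : ∑ k, Real.sqrt (2 * lam k * c k / b' k)
          - ∑ k, Real.sqrt (2 * lam k * c k / bstar k)
          = ∑ k, (Real.sqrt (2 * lam k * c k / b' k) - Real.sqrt (2 * lam k * c k / bstar k)) := by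
        rw [Finset.sum_sub_distrib]
      have h0 : ∑ k, (Real.sqrt (2 * lam k * c k / b' k) - Real.sqrt (2 * lam k * c k / bstar k))
          = (Real.sqrt (2 * lam i * c i / b' i) - Real.sqrt (2 * lam i * c i / bstar i))
          + (Real.sqrt (2 * lam j * c j / b' j) - Real.sqrt (2 * lam j * c j / bstar j)) :=
        aux_sum_two i j hij _ (fun k hki hkj => by rw [hb'k k hki hkj]; ring)
      have h2 : (Real.sqrt (2 * lam i * c i / b' i) - Real.sqrt (2 * lam i * c i / bstar i))
          + (Real.sqrt (2 * lam j * c j / b' j) - Real.sqrt (2 * lam j * c j / bstar j)) < 0 := by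
        rw [hb'i, hb'j, hterm _ _ (hA i).le, hterm _ _ (hA j).le,
          hterm _ _ (hA i).le, hterm _ _ (hA j).le]
        linarith
      linarith [hdiff, h0, h2, hdiff ▸ h0]
    exact absurd (hopt b' hfeas') (not_le.2 hglt)
end

section
/- Let (Ω, 𝔉, ℙ) be a probability space, let λ, B : Ω → ℝ be random variables with λ > 0 and B > 0 almost surely such that λ, 1/B, and W := √(λ/B) are integrable with 𝔼[W] > 0, and let C > 0. Define 𝔼[L_dep*] = 𝔼[√(2Cλ/B)] = √(2C)·𝔼[W] (the expected cost of the state-dependent policy applying the optimal interval √(2C/(λB)) in each state) and 𝔼[L_ind*] = √(2C·𝔼[λ]·𝔼[1/B]) (the optimal expected cost of a state-independent fixed-interval policy). Then 𝔼[L_ind*] / 𝔼[L_dep*] = √(𝔼[λ]·𝔼[1/B]) / 𝔼[W] ≥ 1, with equality if and only if λ·B is almost surely constant. -/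
open MeasureTheory

lemma my_integral_pos {Ω : Type*} [MeasurableSpace Ω] {μ : Measure Ω} [IsProbabilityMeasure μ]
    {f : Ω → ℝ} (hf : Integrable f μ) (hpos : ∀ᵐ ω ∂μ, 0 < f ω) : 0 < ∫ ω, f ω ∂μ := by
  rw [integral_pos_iff_support_of_nonneg_ae (hpos.mono fun ω h => h.le) hf, pos_iff_ne_zero]
  intro h0
  have hz : ∀ᵐ ω ∂μ, f ω = 0 := by
    rw [ae_iff]
    exact measure_mono_null (fun ω hω => hω) h0
  obtain ⟨ω, h1, h2⟩ := (hpos.and hz).exists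
  exact absurd h2 (ne_of_gt h1)

set_option maxHeartbeats 1000000 in
/-- Adaptivity gap. With `W = √(lam/Bf)`, the state-dependent
expected cost is `𝔼[√(2C·lam/Bf)] = √(2C)·𝔼[W]` and the best state-independent
expected cost is `√(2C·𝔼[lam]·𝔼[1/Bf])`; their ratio equals
`√(𝔼[lam]·𝔼[1/Bf])/𝔼[W] ≥ 1`, with equality iff `lam·Bf` is a.s. constant. -/
theorem stmt10 {Ω : Type*} [MeasurableSpace Ω] (μ : Measure Ω)
    [IsProbabilityMeasure μ]
    (lam Bf : Ω → ℝ)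
    (hlam : ∀ᵐ ω ∂μ, 0 < lam ω) (hBf : ∀ᵐ ω ∂μ, 0 < Bf ω)
    (hint_lam : Integrable lam μ)
    (hint_inv : Integrable (fun ω => 1 / Bf ω) μ)
    (W : Ω → ℝ) (hW : ∀ ω, W ω = Real.sqrt (lam ω / Bf ω))
    (hint_W : Integrable W μ) (hEW : 0 < ∫ ω, W ω ∂μ)
    (C : ℝ) (hC : 0 < C)
    (Ldep Lind : ℝ)
    (hLdep : Ldep = ∫ ω, Real.sqrt (2 * C * lam ω / Bf ω) ∂μ)
    (hLind : Lind = Real.sqrt (2 * C * (∫ ω, lam ω ∂μ) * ∫ ω, 1 / Bf ω ∂μ)) :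
    Ldep = Real.sqrt (2 * C) * ∫ ω, W ω ∂μ ∧
    Lind / Ldep
      = Real.sqrt ((∫ ω, lam ω ∂μ) * ∫ ω, 1 / Bf ω ∂μ) / ∫ ω, W ω ∂μ ∧
    1 ≤ Lind / Ldep ∧
    (Lind / Ldep = 1 ↔ ∃ k : ℝ, ∀ᵐ ω ∂μ, lam ω * Bf ω = k) := by
  set A := ∫ ω, lam ω ∂μ with hA
  set I := ∫ ω, 1 / Bf ω ∂μ with hI
  set E := ∫ ω, W ω ∂μ with hE
  have hApos : 0 < A := my_integral_pos hint_lam hlam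
  have hIpos : 0 < I := my_integral_pos hint_inv (hBf.mono fun ω h => by positivity)
  -- X, Y
  set X : Ω → ℝ := fun ω => Real.sqrt (lam ω) with hX
  set Y : Ω → ℝ := fun ω => Real.sqrt (1 / Bf ω) with hY
  have hX2 : (fun ω => X ω ^ 2) =ᵐ[μ] lam := hlam.mono fun ω h => Real.sq_sqrt h.le
  have hY2 : (fun ω => Y ω ^ 2) =ᵐ[μ] (fun ω => 1 / Bf ω) :=
    hBf.mono fun ω h => Real.sq_sqrt (by positivity)
  have hXY : (fun ω => X ω * Y ω) =ᵐ[μ] W := by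
    filter_upwards [hlam] with ω h
    rw [hW, show lam ω / Bf ω = lam ω * (1 / Bf ω) by ring, Real.sqrt_mul h.le]
  have hEXY : ∫ ω, X ω * Y ω ∂μ = E := integral_congr_ae hXY
  -- quadratic
  set h : Ω → ℝ := fun ω => A * Y ω - E * X ω with hh
  set g : Ω → ℝ := fun ω => A ^ 2 * (1 / Bf ω) - 2 * A * E * W ω + E ^ 2 * lam ω with hg
  have hig : Integrable g μ :=
    ((hint_inv.const_mul _).sub (hint_W.const_mul _)).add (hint_lam.const_mul _)
  have hge : (fun ω => h ω ^ 2) =ᵐ[μ] g := by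
    filter_upwards [hX2, hY2, hXY] with ω e1 e2 e3
    have : h ω ^ 2 = A ^ 2 * (Y ω ^ 2) - 2 * A * E * (X ω * Y ω) + E ^ 2 * (X ω ^ 2) := by
      simp only [hh]; ring
    rw [this, e1, e2, e3]
  have hih2 : Integrable (fun ω => h ω ^ 2) μ := hig.congr hge.symm
  have hq : ∫ ω, h ω ^ 2 ∂μ = A * (A * I - E ^ 2) := by
    have h1 : Integrable (fun ω => A ^ 2 * (1 / Bf ω) - 2 * A * E * W ω) μ :=
      (hint_inv.const_mul _).sub (hint_W.const_mul _)
    have e0 : ∫ ω, h ω ^ 2 ∂μ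
        = ∫ ω, (A ^ 2 * (1 / Bf ω) - 2 * A * E * W ω) + E ^ 2 * lam ω ∂μ :=
      integral_congr_ae (hge.mono fun ω e => by rw [e])
    rw [e0, integral_add h1 (hint_lam.const_mul _),
      integral_sub (hint_inv.const_mul _) (hint_W.const_mul _),
      integral_const_mul, integral_const_mul, integral_const_mul, ← hI, ← hE, ← hA]
    ring
  have hq0 : 0 ≤ ∫ ω, h ω ^ 2 ∂μ := integral_nonneg fun ω => sq_nonneg _
  have hCS : E ^ 2 ≤ A * I := by nlinarith [hq0, hq, hApos]
  -- equality characterization : A * I = E ^ 2 ↔ ∃ k, ...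
  have hkey : A * I = E ^ 2 ↔ ∃ k : ℝ, ∀ᵐ ω ∂μ, lam ω * Bf ω = k := by
    constructor
    · intro heq
      refine ⟨(A / E) ^ 2, ?_⟩
      have hz : ∫ ω, h ω ^ 2 ∂μ = 0 := by rw [hq, heq]; ring
      have hz2 : ∀ᵐ ω ∂μ, h ω ^ 2 = 0 := by
        have := (integral_eq_zero_iff_of_nonneg (fun ω => sq_nonneg (h ω)) hih2).mp hz
        filter_upwards [this] with ω e using e
      filter_upwards [hz2, hX2, hY2, hBf, hlam] with ω e0 e1 e2 hb hl
      have hh0 : A * Y ω = E * X ω := by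
        have : h ω = 0 := by
          have := sq_eq_zero_iff.mp e0
          exact this
        simp only [hh] at this; linarith
      have hsq : A ^ 2 * (1 / Bf ω) = E ^ 2 * lam ω := by
        have : (A * Y ω) ^ 2 = (E * X ω) ^ 2 := by rw [hh0]
        calc A ^ 2 * (1 / Bf ω) = A ^ 2 * (Y ω ^ 2) := by rw [e2]
          _ = E ^ 2 * (X ω ^ 2) := by nlinarith [this]
          _ = E ^ 2 * lam ω := by rw [e1]
      have hE0 : E ≠ 0 := ne_of_gt hEW
      have hb0 : Bf ω ≠ 0 := ne_of_gt hb
      field_simp at hsq ⊢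
      nlinarith [hsq]
    · rintro ⟨k, hk⟩
      obtain ⟨ω₀, ⟨hl0, hb0⟩, h3⟩ := ((hlam.and hBf).and hk).exists
      have hk0 : 0 < k := h3 ▸ mul_pos hl0 hb0
      have hlamc : lam =ᵐ[μ] fun ω => k * (1 / Bf ω) := by
        filter_upwards [hk, hBf] with ω e hb
        rw [← e]
        field_simp
      have hWc : W =ᵐ[μ] fun ω => Real.sqrt k * (1 / Bf ω) := by
        filter_upwards [hk, hBf] with ω e hb
        rw [hW, show lam ω / Bf ω = k * (1 / Bf ω) ^ 2 by
          field_simp; nlinarith [e], Real.sqrt_mul hk0.le,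
          Real.sqrt_sq (by positivity : (0:ℝ) ≤ 1 / Bf ω)]
      have hAk : A = k * I := by
        rw [hA, integral_congr_ae hlamc, integral_const_mul, ← hI]
      have hEk : E = Real.sqrt k * I := by
        rw [hE, integral_congr_ae hWc, integral_const_mul, ← hI]
      rw [hAk, hEk]
      have : Real.sqrt k ^ 2 = k := Real.sq_sqrt hk0.le
      nlinarith [this]
  -- part 1
  have part1 : Ldep = Real.sqrt (2 * C) * E := by
    rw [hLdep]
    have heq : ∀ ω, Real.sqrt (2 * C * lam ω / Bf ω) = Real.sqrt (2 * C) * W ω := fun ω => by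
      rw [hW, show 2 * C * lam ω / Bf ω = (2 * C) * (lam ω / Bf ω) by ring,
        Real.sqrt_mul (by positivity)]
    simp_rw [heq]
    rw [integral_const_mul, ← hE]
  have hs2C : Real.sqrt (2 * C) ≠ 0 := ne_of_gt (Real.sqrt_pos.mpr (by positivity))
  have part2 : Lind / Ldep = Real.sqrt (A * I) / E := by
    rw [hLind, part1, show 2 * C * A * I = (2 * C) * (A * I) by ring,
      Real.sqrt_mul (by positivity : (0:ℝ) ≤ 2 * C),
      mul_div_mul_left _ _ hs2C]
  have hAI0 : 0 ≤ A * I := by positivity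
  have part3 : 1 ≤ Lind / Ldep := by
    rw [part2, le_div_iff₀ hEW, one_mul]
    nlinarith [Real.sq_sqrt hAI0, Real.sqrt_nonneg (A * I), hCS, hEW]
  refine ⟨part1, part2, part3, ?_⟩
  rw [part2, div_eq_one_iff_eq (ne_of_gt hEW), ← hkey]
  constructor
  · intro hs
    have := Real.sq_sqrt hAI0
    rw [hs] at this
    linarith [this]
  · intro hs
    rw [hs, Real.sqrt_sq hEW.le]
end
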